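/- For every density operator ρ in the spin-s representation there exists a (classical) probability measure μ on ℝ³ supported on the sphere of radius √(s(s+1)) centered at the origin, whose first and second moments agree with those of the angular momentum in ρ: ∫ x_j dμ(x) = tr(ρL_j) and ∫ x_j x_k dμ(x) = Re tr(ρL_jL_k) for all j,k ∈ {1,2,3}. -/

import Mathlib

/-!
Put `v a = tr (ρ L_a)` and `N a b = Re tr (ρ L_a L_b)`. Positivity of `ρ` makes `N - v vᵀ` positive
semidefinite (it is the covariance of the observables `L_a`), and the Casimir identity
`L₁² + L₂² + L₃² = s(s+1)` gives `tr N = s(s+1) = R²`. Conversely every such pair `(v, N)` is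
realised by a probability measure on the sphere of radius `R`: write
`N - v vᵀ = ∑ λᵢ eᵢ eᵢᵀ` with orthonormal `eᵢ`, so that `D := ∑ λᵢ = R² - ‖v‖²`. The line through
`v` in direction `eᵢ` meets the sphere in two points, and the law on them with mean `v` has second
moment `v vᵀ + D eᵢ eᵢᵀ`; the mixture of these laws with weights `λᵢ / D` is the measure sought.
-/

open Matrix Complex
open scoped ComplexOrder

noncomputable section

/-- spin value s = j/2 -/
def sVal (j : ℕ) : ℝ := (j : ℝ) / 2

/-- m-value of the k-th basis vector: m = k - s -/
def mVal (j : ℕ) (k : Fin (j + 1)) : ℝ := (k : ℝ) - sVal j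

/-- L₃ -/
def L3 (j : ℕ) : Matrix (Fin (j + 1)) (Fin (j + 1)) ℂ :=
  Matrix.diagonal (fun k => (mVal j k : ℂ))

/-- raising operator L₊ -/
def Lp (j : ℕ) : Matrix (Fin (j + 1)) (Fin (j + 1)) ℂ :=
  Matrix.of fun i k =>
    if (i : ℕ) = (k : ℕ) + 1 then
      ((Real.sqrt (sVal j * (sVal j + 1) - mVal j k * (mVal j k + 1)) : ℝ) : ℂ)
    else 0

/-- lowering operator L₋ -/
def Lm (j : ℕ) : Matrix (Fin (j + 1)) (Fin (j + 1)) ℂ :=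
  Matrix.of fun i k =>
    if (i : ℕ) + 1 = (k : ℕ) then
      ((Real.sqrt (sVal j * (sVal j + 1) - mVal j k * (mVal j k - 1)) : ℝ) : ℂ)
    else 0

/-- L₁ = (L₊ + L₋)/2 -/
def L1 (j : ℕ) : Matrix (Fin (j + 1)) (Fin (j + 1)) ℂ := (1 / 2 : ℂ) • (Lp j + Lm j)

/-- L₂ = (L₊ − L₋)/(2i) -/
def L2 (j : ℕ) : Matrix (Fin (j + 1)) (Fin (j + 1)) ℂ :=
  (1 / (2 * Complex.I)) • (Lp j - Lm j)

/-- density operator -/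
def IsDensity {j : ℕ} (ρ : Matrix (Fin (j + 1)) (Fin (j + 1)) ℂ) : Prop :=
  ρ.PosSemidef ∧ ρ.trace = 1

/-- expectation value -/
def expVal {j : ℕ} (ρ A : Matrix (Fin (j + 1)) (Fin (j + 1)) ℂ) : ℝ :=
  ((ρ * A).trace).re

/-- variance -/
def Var {j : ℕ} (ρ A : Matrix (Fin (j + 1)) (Fin (j + 1)) ℂ) : ℝ :=
  ((ρ * A ^ 2).trace).re - (((ρ * A).trace).re) ^ 2

/-- angular momentum component along a direction e ∈ ℝ³ -/
def dirL (j : ℕ) (e : Fin 3 → ℝ) : Matrix (Fin (j + 1)) (Fin (j + 1)) ℂ :=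
  (e 0 : ℂ) • L1 j + (e 1 : ℂ) • L2 j + (e 2 : ℂ) • L3 j

open MeasureTheory

/-- the three angular momentum components as a function `Fin 3 → Matrix` -/
def Lcomp (j : ℕ) : Fin 3 → Matrix (Fin (j + 1)) (Fin (j + 1)) ℂ := ![L1 j, L2 j, L3 j]

open scoped RealInnerProductSpace

section

variable {ι : Type*} [Fintype ι]

structure HasMomentsOnSphere (μ : Measure (EuclideanSpace ℝ ι)) (R : ℝ) (v : ι → ℝ)
    (M : Matrix ι ι ℝ) : Prop where
  isProbabilityMeasure : IsProbabilityMeasure μ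
  measure_compl_sphere : μ (Metric.sphere 0 R)ᶜ = 0
  integral_coord : ∀ a, ∫ x, x a ∂μ = v a
  integral_coord_mul : ∀ a b, ∫ x, x a * x b ∂μ = M a b

namespace HasMomentsOnSphere

variable {μ : Measure (EuclideanSpace ℝ ι)} {R : ℝ} {v : ι → ℝ} {M : Matrix ι ι ℝ}

lemma dirac {x : EuclideanSpace ℝ ι} (hx : ‖x‖ = R) :
    HasMomentsOnSphere (Measure.dirac x) R x (vecMulVec x x) where
  isProbabilityMeasure := inferInstance
  measure_compl_sphere := by simp [hx]
  integral_coord a := by simp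
  integral_coord_mul a b := by simp [vecMulVec_apply]

lemma integrable (h : HasMomentsOnSphere μ R v M) {f : EuclideanSpace ℝ ι → ℝ}
    (hf : Continuous f) : Integrable f μ := by
  have := h.isProbabilityMeasure
  rw [← Measure.restrict_eq_self_of_ae_mem (ae_iff.2 h.measure_compl_sphere)]
  exact hf.continuousOn.integrableOn_compact (isCompact_sphere 0 R)

lemma sum {κ : Type*} {s : Finset κ} {μ : κ → Measure (EuclideanSpace ℝ ι)} {v : κ → ι → ℝ}
    {M : κ → Matrix ι ι ℝ} {q : κ → ℝ} (hq : ∀ i ∈ s, 0 ≤ q i) (hq1 : ∑ i ∈ s, q i = 1)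
    (h : ∀ i ∈ s, HasMomentsOnSphere (μ i) R (v i) (M i)) :
    HasMomentsOnSphere (∑ i ∈ s, ENNReal.ofReal (q i) • μ i) R (∑ i ∈ s, q i • v i)
      (∑ i ∈ s, q i • M i) := by
  have integral_sum {f : EuclideanSpace ℝ ι → ℝ} (hf : Continuous f) :
      ∫ x, f x ∂(∑ i ∈ s, ENNReal.ofReal (q i) • μ i) = ∑ i ∈ s, q i * ∫ x, f x ∂μ i := by
    rw [integral_finsetSum_measure fun i hi => ((h i hi).integrable hf).smul_measure
      ENNReal.ofReal_ne_top]
    refine Finset.sum_congr rfl fun i hi => ?_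
    rw [integral_smul_measure, ENNReal.toReal_ofReal (hq i hi), smul_eq_mul]
  have hcoord (a : ι) : Continuous fun x : EuclideanSpace ℝ ι => x a := by fun_prop
  refine ⟨⟨?_⟩, ?_, fun a => ?_, fun a b => ?_⟩
  · simp only [Measure.coe_finsetSum, Measure.coe_smul, Finset.sum_apply, Pi.smul_apply,
      smul_eq_mul]
    rw [Finset.sum_congr rfl fun i hi => by
        rw [(h i hi).isProbabilityMeasure.measure_univ, mul_one],
      ← ENNReal.ofReal_sum_of_nonneg hq, hq1, ENNReal.ofReal_one]
  · simp only [Measure.coe_finsetSum, Measure.coe_smul, Finset.sum_apply, Pi.smul_apply]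
    exact Finset.sum_eq_zero fun i hi => by rw [(h i hi).measure_compl_sphere, smul_zero]
  · rw [integral_sum (hcoord a), Finset.sum_apply]
    exact Finset.sum_congr rfl fun i hi => by rw [(h i hi).integral_coord]; rfl
  · rw [integral_sum (f := fun x => x a * x b) ((hcoord a).mul (hcoord b)), Matrix.sum_apply]
    exact Finset.sum_congr rfl fun i hi => by rw [(h i hi).integral_coord_mul]; rfl

end HasMomentsOnSphere
end

/-- The values `t σ` are the two roots of `a t² + 2 b t = a`, whose product is `-1`; the weights
make the mean `0`, and then the second moment is `-t true * t false = 1`. -/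
lemma exists_two_point_law (a b : ℝ) (ha : 0 < a) :
    ∃ p t : Bool → ℝ, (∀ σ, 0 ≤ p σ) ∧ ∑ σ, p σ = 1 ∧ ∑ σ, p σ * t σ = 0 ∧
      ∑ σ, p σ * t σ ^ 2 = 1 ∧ ∀ σ, a * t σ ^ 2 + 2 * b * t σ = a := by
  set r := √(a ^ 2 + b ^ 2)
  have hr2 : r ^ 2 = a ^ 2 + b ^ 2 := Real.sq_sqrt (by positivity)
  have hbr : |b| < r := by
    rw [← Real.sqrt_sq_eq_abs]
    exact Real.sqrt_lt_sqrt (sq_nonneg b) (by nlinarith)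
  have hr : 0 < r := (abs_nonneg b).trans_lt hbr
  obtain ⟨hb₁, hb₂⟩ := abs_lt.1 hbr
  refine ⟨fun σ => if σ then (r + b) / (2 * r) else (r - b) / (2 * r),
    fun σ => if σ then (r - b) / a else -(r + b) / a, ?_, ?_, ?_, ?_, ?_⟩
  · intro σ
    cases σ <;> exact div_nonneg (by linarith) (by positivity)
  · simp only [Fintype.sum_bool, ite_true, Bool.false_eq_true, ite_false]
    field_simp
    ring
  · simp only [Fintype.sum_bool, ite_true, Bool.false_eq_true, ite_false]
    field_simp
    ring
  · simp only [Fintype.sum_bool, ite_true, Bool.false_eq_true, ite_false]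
    field_simp
    linear_combination 2 * r * hr2
  · intro σ
    cases σ <;> simp only [Bool.false_eq_true, ite_true, ite_false] <;> field_simp <;>
      linear_combination hr2

lemma exists_hasMomentsOnSphere_add_vecMulVec {ι : Type*} [Fintype ι] {R : ℝ} (hR : 0 ≤ R)
    (v u : EuclideanSpace ℝ ι) (h : ‖v‖ ^ 2 + ‖u‖ ^ 2 = R ^ 2) :
    ∃ μ, HasMomentsOnSphere μ R v (vecMulVec v v + vecMulVec u u) := by
  rcases eq_or_ne u 0 with rfl | hu
  · have hv : ‖v‖ = R := by simpa [sq_eq_sq₀ (norm_nonneg v) hR] using h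
    exact ⟨Measure.dirac v, by simpa using HasMomentsOnSphere.dirac hv⟩
  obtain ⟨p, t, hp, hp1, hpt, hpt2, ht⟩ :=
    exists_two_point_law (‖u‖ ^ 2) ⟪v, u⟫ (by positivity)
  have hnorm (σ : Bool) : ‖v + t σ • u‖ = R := by
    rw [← sq_eq_sq₀ (norm_nonneg _) hR, norm_add_sq_real, norm_smul, inner_smul_right,
      Real.norm_eq_abs, mul_pow, sq_abs, ← h]
    linear_combination ht σ
  refine ⟨∑ σ, ENNReal.ofReal (p σ) • Measure.dirac (v + t σ • u), ?_⟩
  convert HasMomentsOnSphere.sum (s := Finset.univ) (fun σ _ => hp σ) hp1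
    fun σ _ => HasMomentsOnSphere.dirac (hnorm σ) using 1
  all_goals simp only [Fintype.sum_bool] at hp1 hpt hpt2 ⊢
  · ext a
    simp only [Pi.add_apply, Pi.smul_apply, WithLp.ofLp_add, WithLp.ofLp_smul, smul_eq_mul]
    linear_combination (-v a) * hp1 - u a * hpt
  · ext a b
    simp only [Matrix.add_apply, Matrix.smul_apply, vecMulVec_apply, Pi.add_apply, Pi.smul_apply,
      WithLp.ofLp_add, WithLp.ofLp_smul, smul_eq_mul]
    linear_combination (-v a * v b) * hp1 - (v a * u b + u a * v b) * hpt - u a * u b * hpt2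

lemma Matrix.IsHermitian.eq_sum_eigenvalues_smul_vecMulVec {𝕜 ι : Type*} [RCLike 𝕜] [Fintype ι]
    [DecidableEq ι] {A : Matrix ι ι 𝕜} (hA : A.IsHermitian) :
    A = ∑ i, hA.eigenvalues i •
      vecMulVec (hA.eigenvectorBasis i) (star (hA.eigenvectorBasis i : ι → 𝕜)) := by
  conv_lhs => rw [hA.spectral_theorem]
  ext a b
  simp [Unitary.conjStarAlgAut_apply, mul_apply, eigenvectorUnitary_apply, Matrix.sum_apply,
    vecMulVec_apply, diagonal_apply, RCLike.real_smul_eq_coe_mul, mul_assoc, mul_left_comm]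

theorem exists_hasMomentsOnSphere {ι : Type*} [Fintype ι] {R : ℝ} (hR : 0 ≤ R)
    (v : EuclideanSpace ℝ ι) {N : Matrix ι ι ℝ} (hC : (N - vecMulVec v v).PosSemidef)
    (htr : N.trace = R ^ 2) : ∃ μ, HasMomentsOnSphere μ R v N := by
  classical
  have htrC : (N - vecMulVec v v).trace = R ^ 2 - ‖v‖ ^ 2 := by
    rw [trace_sub, htr, trace_vecMulVec, EuclideanSpace.real_norm_sq_eq]
    simp [dotProduct, sq]
  rcases hC.trace_nonneg.eq_or_lt with hD | hD
  · have hN : N = vecMulVec v v := sub_eq_zero.1 (hC.trace_eq_zero_iff.1 hD.symm)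
    have hv : ‖v‖ = R := by
      rw [← sq_eq_sq₀ (norm_nonneg v) hR]; linarith
    exact ⟨Measure.dirac v, hN ▸ HasMomentsOnSphere.dirac hv⟩
  set D := (N - vecMulVec v v).trace
  set e := hC.1.eigenvectorBasis
  have hu (i : ι) : ‖v‖ ^ 2 + ‖√D • e i‖ ^ 2 = R ^ 2 := by
    rw [norm_smul, e.orthonormal.1 i, mul_one, Real.norm_eq_abs, sq_abs, Real.sq_sqrt hD.le]
    linarith
  choose ν hν using fun i => exists_hasMomentsOnSphere_add_vecMulVec hR v (√D • e i) (hu i)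
  have hsum : ∑ i, hC.1.eigenvalues i / D = 1 := by
    rw [← Finset.sum_div, div_eq_one_iff_eq hD.ne']
    simp [D, hC.1.trace_eq_sum_eigenvalues]
  refine ⟨∑ i, ENNReal.ofReal (hC.1.eigenvalues i / D) • ν i, ?_⟩
  convert HasMomentsOnSphere.sum (s := Finset.univ)
    (fun i _ => div_nonneg (hC.eigenvalues_nonneg i) hD.le) hsum fun i _ => hν i using 1
  · rw [← Finset.sum_smul, hsum, one_smul]
  · have hterm (i : ι) : (hC.1.eigenvalues i / D) • (vecMulVec v v +
        vecMulVec (√D • e i : EuclideanSpace ℝ ι) (√D • e i : EuclideanSpace ℝ ι)) =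
        (hC.1.eigenvalues i / D) • vecMulVec v v + hC.1.eigenvalues i • vecMulVec (e i) (e i) := by
      rw [smul_add, WithLp.ofLp_smul, smul_vecMulVec, vecMulVec_smul, smul_smul, smul_smul,
        mul_assoc, Real.mul_self_sqrt hD.le, div_mul_cancel₀ _ hD.ne']
    have hspec := hC.1.eq_sum_eigenvalues_smul_vecMulVec
    simp only [star_trivial] at hspec
    rw [Finset.sum_congr rfl fun i _ => hterm i, Finset.sum_add_distrib, ← Finset.sum_smul, hsum,
      one_smul, ← hspec, add_sub_cancel]

section

variable {n : Type*} [Fintype n] {ρ : Matrix n n ℂ}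

lemma re_trace_mul_mul_comm (hρ : ρ.IsHermitian) {A B : Matrix n n ℂ} (hA : A.IsHermitian)
    (hB : B.IsHermitian) : (ρ * (A * B)).trace.re = (ρ * (B * A)).trace.re := by
  rw [← Complex.conj_re, ← RCLike.star_def, ← trace_conjTranspose, conjTranspose_mul,
    conjTranspose_mul, hρ.eq, hA.eq, hB.eq, ← Matrix.mul_assoc, trace_mul_comm, Matrix.mul_assoc]

lemma sq_re_trace_mul_le [DecidableEq n] (hρ : ρ.PosSemidef) (htr : ρ.trace = 1) {A : Matrix n n ℂ}
    (hA : A.IsHermitian) : (ρ * A).trace.re ^ 2 ≤ (ρ * (A * A)).trace.re := by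
  set c := (ρ * A).trace.re
  set Y := A - (c : ℂ) • 1
  have hY : Y.IsHermitian := hA.sub (by simp [IsHermitian])
  have h0 : 0 ≤ (ρ * (Y * Y)).trace.re := by
    have := (Complex.nonneg_iff.1 (hρ.conjTranspose_mul_mul_same Y).trace_nonneg).1
    rwa [hY.eq, trace_mul_comm, ← Matrix.mul_assoc, trace_mul_comm] at this
  have hexp : (ρ * (Y * Y)).trace.re = (ρ * (A * A)).trace.re - c ^ 2 := by
    simp only [Y, sub_mul, mul_sub, Matrix.mul_smul, Matrix.smul_mul, Matrix.one_mul, smul_smul,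
      trace_sub, trace_smul, htr, smul_eq_mul, Complex.sub_re, Complex.re_ofReal_mul,
      ← Complex.ofReal_mul, mul_one, Complex.ofReal_re]
    ring
  linarith

lemma posSemidef_covariance [DecidableEq n] {ι : Type*} [Fintype ι] (hρ : ρ.PosSemidef)
    (htr : ρ.trace = 1) {A : ι → Matrix n n ℂ} (hA : ∀ a, (A a).IsHermitian) :
    (of (fun a b => (ρ * (A a * A b)).trace.re) -
      vecMulVec (fun a => (ρ * A a).trace.re) (fun a => (ρ * A a).trace.re)).PosSemidef := by
  refine .of_dotProduct_mulVec_nonneg ?_ fun x => ?_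
  · ext a b
    simp [vecMulVec_apply, re_trace_mul_mul_comm hρ.1 (hA a) (hA b), mul_comm]
  set X := ∑ a, (x a : ℂ) • A a
  have hX : X.IsHermitian := isSelfAdjoint_sum _ fun a _ => (hA a).smul (Complex.conj_ofReal _)
  have hlin : (ρ * X).trace.re = ∑ a, x a * (ρ * A a).trace.re := by
    simp [X, Matrix.mul_sum, trace_sum, Complex.re_sum]
  have hquad : (ρ * (X * X)).trace.re = ∑ a, ∑ b, x a * x b * (ρ * (A a * A b)).trace.re := by
    simp [X, Finset.sum_mul_sum, Matrix.mul_sum, trace_sum, Complex.re_sum, mul_assoc,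
      mul_left_comm]
  have hvar := sq_re_trace_mul_le hρ htr hX
  rw [hlin, hquad] at hvar
  have hform : x ⬝ᵥ (of (fun a b => (ρ * (A a * A b)).trace.re) -
      vecMulVec (fun a => (ρ * A a).trace.re) (fun a => (ρ * A a).trace.re)) *ᵥ x =
      ∑ a, ∑ b, x a * x b * (ρ * (A a * A b)).trace.re - (∑ a, x a * (ρ * A a).trace.re) ^ 2 := by
    rw [sq, Finset.sum_mul_sum, ← Finset.sum_sub_distrib]
    simp only [dotProduct, mulVec, Matrix.sub_apply, of_apply, vecMulVec_apply, Finset.mul_sum,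
      ← Finset.sum_sub_distrib]
    exact Finset.sum_congr rfl fun a _ => Finset.sum_congr rfl fun b _ => by ring
  rw [star_trivial, hform]
  linarith

end

lemma mVal_add_one {j : ℕ} {k l : Fin (j + 1)} (h : (k : ℕ) = l + 1) : mVal j k = mVal j l + 1 := by
  rw [mVal, mVal, h]
  push_cast
  ring

lemma sVal_mul_sub_mVal_mul_nonneg (j : ℕ) (k : Fin (j + 1)) :
    0 ≤ sVal j * (sVal j + 1) - mVal j k * (mVal j k + 1) := by
  have hk : (k : ℝ) ≤ j := by exact_mod_cast Nat.le_of_lt_succ k.2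
  have : (0 : ℝ) ≤ k := k.val.cast_nonneg
  unfold mVal sVal
  nlinarith

lemma Lm_eq_conjTranspose_Lp (j : ℕ) : Lm j = (Lp j)ᴴ := by
  ext i k
  simp only [Lm, _root_.Lp, conjTranspose_apply, of_apply]
  by_cases h : (k : ℕ) = i + 1
  · simp [h, mVal_add_one h, mul_comm (mVal j i + 1)]
  · simp [h, Ne.symm h]

lemma Lp_mul_Lm (j : ℕ) : Lp j * Lm j =
    diagonal fun k => ((sVal j * (sVal j + 1) - mVal j k * (mVal j k - 1) : ℝ) : ℂ) := by
  ext i k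
  simp only [mul_apply, _root_.Lp, Lm, of_apply, ite_zero_mul_ite_zero, diagonal_apply]
  split_ifs with hik
  · subst hik
    rcases Nat.eq_zero_or_pos i with h0 | hpos
    · rw [Finset.sum_eq_zero fun l _ => if_neg (by omega),
        show mVal j i = -sVal j by simp [mVal, h0]]
      push_cast
      ring
    set l : Fin (j + 1) := ⟨i - 1, by omega⟩
    have hl : (i : ℕ) = l + 1 := (Nat.sub_add_cancel hpos).symm
    have hcond (l' : Fin (j + 1)) : (i : ℕ) = l' + 1 ∧ (l' : ℕ) + 1 = i ↔ l' = l := by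
      rw [Fin.ext_iff]; omega
    simp only [hcond, Finset.sum_ite_eq', Finset.mem_univ, if_true, mVal_add_one hl]
    rw [add_sub_cancel_right, mul_comm (mVal j l + 1), ← Complex.ofReal_mul,
      Real.mul_self_sqrt (sVal_mul_sub_mVal_mul_nonneg j l)]
  · exact Finset.sum_eq_zero fun l _ => if_neg fun h => hik (Fin.ext (by omega))

lemma Lm_mul_Lp (j : ℕ) : Lm j * Lp j =
    diagonal fun k => ((sVal j * (sVal j + 1) - mVal j k * (mVal j k + 1) : ℝ) : ℂ) := by
  ext i k
  simp only [mul_apply, _root_.Lp, Lm, of_apply, ite_zero_mul_ite_zero, diagonal_apply]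
  split_ifs with hik
  · subst hik
    rcases Nat.lt_or_ge (i : ℕ) j with hlt | hge
    · set l : Fin (j + 1) := ⟨i + 1, by omega⟩
      have hl : (l : ℕ) = i + 1 := rfl
      have hcond (l' : Fin (j + 1)) : (i : ℕ) + 1 = l' ∧ (l' : ℕ) = i + 1 ↔ l' = l := by
        rw [Fin.ext_iff]; omega
      simp only [hcond, Finset.sum_ite_eq', Finset.mem_univ, if_true, mVal_add_one hl]
      rw [add_sub_cancel_right, mul_comm (mVal j i + 1), ← Complex.ofReal_mul,
        Real.mul_self_sqrt (sVal_mul_sub_mVal_mul_nonneg j i)]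
    · have hi : (i : ℕ) = j := by omega
      rw [Finset.sum_eq_zero fun l _ => if_neg (by omega), mVal, hi, sVal]
      push_cast
      ring
  · exact Finset.sum_eq_zero fun l _ => if_neg fun h => hik (Fin.ext (by omega))

lemma isHermitian_L1 (j : ℕ) : (L1 j).IsHermitian := by
  simp [L1, IsHermitian, Lm_eq_conjTranspose_Lp, add_comm]

lemma isHermitian_L2 (j : ℕ) : (L2 j).IsHermitian := by
  rw [L2, IsHermitian, conjTranspose_smul, conjTranspose_sub, Lm_eq_conjTranspose_Lp,
    conjTranspose_conjTranspose, ← neg_sub, smul_neg, ← neg_smul]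
  congr 1
  simp

lemma isHermitian_L3 (j : ℕ) : (L3 j).IsHermitian := by
  simp [L3, IsHermitian, diagonal_conjTranspose]

lemma isHermitian_Lcomp (j : ℕ) (a : Fin 3) : (Lcomp j a).IsHermitian := by
  fin_cases a
  exacts [isHermitian_L1 j, isHermitian_L2 j, isHermitian_L3 j]

lemma sum_Lcomp_mul_self (j : ℕ) :
    ∑ a, Lcomp j a * Lcomp j a = ((sVal j * (sVal j + 1) : ℝ) : ℂ) • 1 := by
  have h12 : L1 j * L1 j + L2 j * L2 j = (1 / 2 : ℂ) • (Lp j * Lm j + Lm j * Lp j) := by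
    have hI : (1 / (2 * I)) * (1 / (2 * I)) = -(1 / 2 * (1 / 2) : ℂ) := by
      field_simp
      simp
    simp only [L1, L2, smul_mul_smul, hI, add_mul, mul_add, sub_mul, mul_sub]
    module
  rw [Fin.sum_univ_three]
  change L1 j * L1 j + L2 j * L2 j + L3 j * L3 j = _
  rw [h12, Lp_mul_Lm, Lm_mul_Lp, L3, diagonal_mul_diagonal, diagonal_add, ← diagonal_smul,
    diagonal_add, smul_one_eq_diagonal]
  congr 1
  funext k
  simp only [Pi.smul_apply, smul_eq_mul]
  push_cast
  ring

theorem vector_model_general (j : ℕ)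
    (ρ : Matrix (Fin (j + 1)) (Fin (j + 1)) ℂ) (hρ : IsDensity ρ) :
    ∃ μ : Measure (EuclideanSpace ℝ (Fin 3)), IsProbabilityMeasure μ ∧
      μ (Metric.sphere (0 : EuclideanSpace ℝ (Fin 3))
          (Real.sqrt (sVal j * (sVal j + 1))))ᶜ = 0 ∧
      (∀ a : Fin 3, ∫ x, x a ∂μ = expVal ρ (Lcomp j a)) ∧
      (∀ a b : Fin 3, ∫ x, x a * x b ∂μ =
        ((ρ * (Lcomp j a * Lcomp j b)).trace).re) := by
  have hs : 0 ≤ sVal j * (sVal j + 1) := by unfold sVal; positivity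
  have htr : (of fun a b => (ρ * (Lcomp j a * Lcomp j b)).trace.re).trace =
      √(sVal j * (sVal j + 1)) ^ 2 := by
    rw [Real.sq_sqrt hs, trace]
    simp only [diag_apply, of_apply]
    rw [← Complex.re_sum, ← trace_sum, ← Matrix.mul_sum, sum_Lcomp_mul_self, mul_smul_comm,
      trace_smul, Matrix.mul_one, hρ.2, smul_eq_mul, mul_one, Complex.ofReal_re]
  obtain ⟨μ, hμ⟩ := exists_hasMomentsOnSphere (Real.sqrt_nonneg _)
    (WithLp.toLp 2 fun a => expVal ρ (Lcomp j a))
    (posSemidef_covariance hρ.1 hρ.2 (isHermitian_Lcomp j)) htr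
  exact ⟨μ, hμ.isProbabilityMeasure, hμ.measure_compl_sphere, hμ.integral_coord,
    hμ.integral_coord_mul⟩

/-- the vector model — for every density operator there is a classical
    probability measure on the sphere of radius √(s(s+1)) matching all first and
    second moments of the angular momentum. -/
theorem vector_model (j : ℕ) (hj : 0 < j)
    (ρ : Matrix (Fin (j + 1)) (Fin (j + 1)) ℂ) (hρ : IsDensity ρ) :
    ∃ μ : Measure (EuclideanSpace ℝ (Fin 3)), IsProbabilityMeasure μ ∧
      μ (Metric.sphere (0 : EuclideanSpace ℝ (Fin 3))
          (Real.sqrt (sVal j * (sVal j + 1))))ᶜ = 0 ∧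
      (∀ a : Fin 3, ∫ x, x a ∂μ = expVal ρ (Lcomp j a)) ∧
      (∀ a b : Fin 3, ∫ x, x a * x b ∂μ =
        ((ρ * (Lcomp j a * Lcomp j b)).trace).re) :=
  vector_model_general j ρ hρ
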